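/- (Regularized steady-state policy gradient.) Define the frozen n-step extensions Q^r_0 := Q^r_{θ₀} and Q^r_n(a) := ∫_A p^{(n)}_{θ₀}(a'|a) Q^r_{θ₀}(a') da' for n ≥ 1, and the gradient terms g^r_n(a) := ∂_θ|_{θ=θ₀} ∫_A p_θ(a'|a) Q^r_n(a') da'. Then the function θ ↦ ∫_A π^s_θ(a) Q^r_θ(a) da is differentiable at θ₀ and d/dθ|_{θ=θ₀} ∫_A π^s_θ(a) Q^r_θ(a) da = ∫_A π^s_{θ₀}(a) · [ ∂_θ|_{θ=θ₀} (∫_A p_θ(a'|a) Q^r_θ(a') da') + ∑_{n=1}^∞ g^r_n(a) ] da, where in the first term inside the bracket the derivative ∂_θ acts jointly on both the transition density p_θ and the regularized function Q^r_θ, the series converging absolutely and uniformly in a ∈ A. -/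

import Mathlib

open MeasureTheory Filter
open scoped Topology
set_option maxHeartbeats 1000000

/-- The frozen n-step extensions of a function `Q` for a transition density `q` on `A`:
`Q_0 = Q` and `Q_{n+1}(a) = ∫_A q(a₁|a) Q_n(a₁) da₁`, so that
`Q_n(a) = ∫_A q^{(n)}(a'|a) Q(a') da'` for the n-step transition density `q^{(n)}`. -/
noncomputable def Qiter {d : ℕ} (A : Set (Fin d → ℝ))
    (q : (Fin d → ℝ) → (Fin d → ℝ) → ℝ) (Q : (Fin d → ℝ) → ℝ) :
    ℕ → (Fin d → ℝ) → ℝ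
  | 0 => Q
  | n + 1 => fun a => ∫ a' in A, q a a' * Qiter A q Q n a'

/-- The gradient terms of the steady-state policy gradient series:
`g_n(a) = ∂_θ|_{θ=θ₀} ∫_A p_θ(a'|a) Q_n(a') da'`, where `Q_n` is the frozen
n-step extension for the chain with transition density `p_{θ₀}`. -/
noncomputable def gterm {d : ℕ} (A : Set (Fin d → ℝ))
    (p : ℝ → (Fin d → ℝ) → (Fin d → ℝ) → ℝ) (Q : (Fin d → ℝ) → ℝ)
    (θ₀ : ℝ) (n : ℕ) (a : Fin d → ℝ) : ℝ :=
  deriv (fun θ => ∫ a' in A, p θ a a' * Qiter A (p θ₀) Q n a') θ₀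

/-- **Regularized steady-state policy gradient.** For a family of
regularized value functions `Q^r_θ` (with `Q^r` and `∂_θ Q^r` continuous and bounded),
define the frozen n-step extensions `Q^r_n` of `Q^r_{θ₀}` and the gradient terms
`g^r_n(a) = ∂_θ|_{θ=θ₀} ∫_A p_θ(a'|a) Q^r_n(a') da'`. Then
`θ ↦ ∫_A π^s_θ(a) Q^r_θ(a) da` is differentiable at `θ₀`, with derivative
`∫_A π^s_{θ₀}(a) [∂_θ|_{θ₀} (∫_A p_θ(a'|a) Q^r_θ(a') da') + ∑_{n=1}^∞ g^r_n(a)] da`,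
where in the first bracketed term the derivative acts jointly on `p_θ` and `Q^r_θ`,
the series converging absolutely and uniformly in `a ∈ A`. -/
theorem regularized_steady_state_policy_gradient
    (d : ℕ) (hd : 1 ≤ d)
    (A : Set (Fin d → ℝ)) (hA_compact : IsCompact A) (hA_pos : 0 < volume A)
    (I : Set ℝ) (hI_open : IsOpen I) (hI_conn : I.OrdConnected)
    (p dp : ℝ → (Fin d → ℝ) → (Fin d → ℝ) → ℝ)
    (hp_cont : ContinuousOn
      (fun x : ℝ × ((Fin d → ℝ) × (Fin d → ℝ)) => p x.1 x.2.1 x.2.2) (I ×ˢ A ×ˢ A))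
    (hdp_cont : ContinuousOn
      (fun x : ℝ × ((Fin d → ℝ) × (Fin d → ℝ)) => dp x.1 x.2.1 x.2.2) (I ×ˢ A ×ˢ A))
    (Cp : ℝ)
    (hp_bdd : ∀ θ ∈ I, ∀ a ∈ A, ∀ a' ∈ A, |p θ a a'| ≤ Cp ∧ |dp θ a a'| ≤ Cp)
    (hp_deriv : ∀ θ ∈ I, ∀ a ∈ A, ∀ a' ∈ A, HasDerivAt (fun t => p t a a') (dp θ a a') θ)
    (hp_dens : ∀ θ ∈ I, ∀ a ∈ A, ∫ a' in A, p θ a a' = 1)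
    (δ : ℝ) (hδ : 0 < δ)
    (hδ_inf : ∀ θ ∈ I, ∀ a ∈ A, ∀ a' ∈ A, δ ≤ p θ a a')
    (πs : ℝ → (Fin d → ℝ) → ℝ)
    (hπs_meas : ∀ θ ∈ I, Measurable (πs θ))
    (hπs_nonneg : ∀ θ ∈ I, ∀ a ∈ A, 0 ≤ πs θ a)
    (hπs_dens : ∀ θ ∈ I, ∫ a in A, πs θ a = 1)
    (hπs_stat : ∀ θ ∈ I, ∀ a' ∈ A, πs θ a' = ∫ a in A, πs θ a * p θ a a')
    (dπs : ℝ → (Fin d → ℝ) → ℝ) (Cπ : ℝ)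
    (hπs_deriv : ∀ θ ∈ I, ∀ a ∈ A, HasDerivAt (fun t => πs t a) (dπs θ a) θ)
    (hdπs_bdd : ∀ θ ∈ I, ∀ a ∈ A, |dπs θ a| ≤ Cπ)
    (Qr dQr : ℝ → (Fin d → ℝ) → ℝ)
    (hQr_cont : ContinuousOn
      (fun x : ℝ × (Fin d → ℝ) => Qr x.1 x.2) (I ×ˢ A))
    (hdQr_cont : ContinuousOn
      (fun x : ℝ × (Fin d → ℝ) => dQr x.1 x.2) (I ×ˢ A))
    (CQ : ℝ)
    (hQr_bdd : ∀ θ ∈ I, ∀ a ∈ A, |Qr θ a| ≤ CQ ∧ |dQr θ a| ≤ CQ)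
    (hQr_deriv : ∀ θ ∈ I, ∀ a ∈ A, HasDerivAt (fun t => Qr t a) (dQr θ a) θ)
    (θ₀ : ℝ) (hθ₀ : θ₀ ∈ I) :
    (∀ a ∈ A, Summable (fun n : ℕ => |gterm A p (Qr θ₀) θ₀ (n + 1) a|)) ∧
    TendstoUniformlyOn (fun N a => ∑ n ∈ Finset.range N, gterm A p (Qr θ₀) θ₀ (n + 1) a)
      (fun a => ∑' n : ℕ, gterm A p (Qr θ₀) θ₀ (n + 1) a) atTop A ∧
    HasDerivAt (fun θ => ∫ a in A, πs θ a * Qr θ a)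
      (∫ a in A, πs θ₀ a *
        (deriv (fun θ => ∫ a' in A, p θ a a' * Qr θ a') θ₀
          + ∑' n : ℕ, gterm A p (Qr θ₀) θ₀ (n + 1) a)) θ₀ := by
  
  classical
  have hA_meas : MeasurableSet A := hA_compact.isClosed.measurableSet
  have hA_ne : A.Nonempty := by
    rcases Set.eq_empty_or_nonempty A with h | h
    · simp [h] at hA_pos
    · exact h
  obtain ⟨a₀, ha₀⟩ := hA_ne
  have hfin : volume A < ⊤ := hA_compact.measure_lt_top
  haveI hFMμ : IsFiniteMeasure (volume.restrict A) :=
    ⟨by rwa [Measure.restrict_apply_univ]⟩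
  have hμ : True := trivial
  set m : ℝ := (volume A).toReal with hmdef
  have hm_pos : 0 < m := ENNReal.toReal_pos hA_pos.ne' hfin.ne
  have hCp0 : 0 ≤ Cp := le_trans (abs_nonneg _) (hp_bdd θ₀ hθ₀ a₀ ha₀ a₀ ha₀).1
  have hCQ0 : 0 ≤ CQ := le_trans (abs_nonneg _) (hQr_bdd θ₀ hθ₀ a₀ ha₀).1
  have hCπ0 : 0 ≤ Cπ := le_trans (abs_nonneg _) (hdπs_bdd θ₀ hθ₀ a₀ ha₀)
  -- continuity of slices
  have hp_sl : ∀ θ ∈ I, ∀ a ∈ A, ContinuousOn (fun a' => p θ a a') A := by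
    intro θ hθ a ha
    have : ContinuousOn ((fun x : ℝ × ((Fin d → ℝ) × (Fin d → ℝ)) => p x.1 x.2.1 x.2.2) ∘
        (fun a' => (θ, a, a'))) A := by
      refine hp_cont.comp (Continuous.continuousOn (by fun_prop)) ?_
      intro a' ha'; exact ⟨hθ, ha, ha'⟩
    exact this
  have hdp_sl : ∀ θ ∈ I, ∀ a ∈ A, ContinuousOn (fun a' => dp θ a a') A := by
    intro θ hθ a ha
    have : ContinuousOn ((fun x : ℝ × ((Fin d → ℝ) × (Fin d → ℝ)) => dp x.1 x.2.1 x.2.2) ∘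
        (fun a' => (θ, a, a'))) A := by
      refine hdp_cont.comp (Continuous.continuousOn (by fun_prop)) ?_
      intro a' ha'; exact ⟨hθ, ha, ha'⟩
    exact this
  -- (volume.restrict A)-product measurability of p and dp slices in (a, a')
  have hprod_eq : ((volume.restrict A).prod (volume.restrict A)) = (volume.prod volume).restrict (A ×ˢ A) :=
    Measure.prod_restrict A A
  have hp_prod : ∀ θ ∈ I,
      AEStronglyMeasurable (fun z : (Fin d → ℝ) × (Fin d → ℝ) => p θ z.1 z.2) (((volume.restrict A).prod (volume.restrict A))) := by
    intro θ hθ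
    rw [hprod_eq]
    refine ContinuousOn.aestronglyMeasurable ?_ (hA_meas.prod hA_meas)
    have : ContinuousOn ((fun x : ℝ × ((Fin d → ℝ) × (Fin d → ℝ)) => p x.1 x.2.1 x.2.2) ∘
        (fun z : (Fin d → ℝ) × (Fin d → ℝ) => (θ, z))) (A ×ˢ A) := by
      refine hp_cont.comp (Continuous.continuousOn (by fun_prop)) ?_
      intro z hz; exact ⟨hθ, hz⟩
    exact this
  have hdp_prod : ∀ θ ∈ I,
      AEStronglyMeasurable (fun z : (Fin d → ℝ) × (Fin d → ℝ) => dp θ z.1 z.2) (((volume.restrict A).prod (volume.restrict A))) := by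
    intro θ hθ
    rw [hprod_eq]
    refine ContinuousOn.aestronglyMeasurable ?_ (hA_meas.prod hA_meas)
    have : ContinuousOn ((fun x : ℝ × ((Fin d → ℝ) × (Fin d → ℝ)) => dp x.1 x.2.1 x.2.2) ∘
        (fun z : (Fin d → ℝ) × (Fin d → ℝ) => (θ, z))) (A ×ˢ A) := by
      refine hdp_cont.comp (Continuous.continuousOn (by fun_prop)) ?_
      intro z hz; exact ⟨hθ, hz⟩
    exact this
  -- integrability from boundedness
  have hbdd_int : ∀ (f : (Fin d → ℝ) → ℝ) (C : ℝ), AEStronglyMeasurable f (volume.restrict A) →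
      (∀ a ∈ A, |f a| ≤ C) → Integrable f (volume.restrict A) := by
    intro f C hm hb
    refine Integrable.mono' (integrable_const C) hm ?_
    filter_upwards [ae_restrict_mem hA_meas] with a ha using hb a ha
  
  have hp_slm : ∀ θ ∈ I, ∀ a ∈ A, AEStronglyMeasurable (fun a' => p θ a a') (volume.restrict A) :=
    fun θ hθ a ha => (hp_sl θ hθ a ha).aestronglyMeasurable hA_meas
  have hdp_slm : ∀ θ ∈ I, ∀ a ∈ A, AEStronglyMeasurable (fun a' => dp θ a a') (volume.restrict A) :=
    fun θ hθ a ha => (hdp_sl θ hθ a ha).aestronglyMeasurable hA_meas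
  have hpf_int : ∀ θ ∈ I, ∀ a ∈ A, ∀ (f : (Fin d → ℝ) → ℝ) (C : ℝ),
      AEStronglyMeasurable f (volume.restrict A) → (∀ a' ∈ A, |f a'| ≤ C) →
      Integrable (fun a' => p θ a a' * f a') (volume.restrict A) := by
    intro θ hθ a ha f C hfm hfb
    refine hbdd_int _ (Cp * C) ((hp_slm θ hθ a ha).mul hfm) ?_
    intro a' ha'
    rw [abs_mul]
    exact mul_le_mul (hp_bdd θ hθ a ha a' ha').1 (hfb a' ha') (abs_nonneg _)
      hCp0
  have hdpf_int : ∀ θ ∈ I, ∀ a ∈ A, ∀ (f : (Fin d → ℝ) → ℝ) (C : ℝ),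
      AEStronglyMeasurable f (volume.restrict A) → (∀ a' ∈ A, |f a'| ≤ C) →
      Integrable (fun a' => dp θ a a' * f a') (volume.restrict A) := by
    intro θ hθ a ha f C hfm hfb
    refine hbdd_int _ (Cp * C) ((hdp_slm θ hθ a ha).mul hfm) ?_
    intro a' ha'
    rw [abs_mul]
    exact mul_le_mul (hp_bdd θ hθ a ha a' ha').2 (hfb a' ha') (abs_nonneg _) hCp0
  -- the frozen iterates
  set Q : ℕ → (Fin d → ℝ) → ℝ := Qiter A (p θ₀) (Qr θ₀) with hQdef
  have hQsucc : ∀ n a, Q (n + 1) a = ∫ a' in A, p θ₀ a a' * Q n a' := fun n a => rfl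
  have hQmeas : ∀ n, AEStronglyMeasurable (Q n) (volume.restrict A) := by
    intro n; induction n with
    | zero =>
      refine ContinuousOn.aestronglyMeasurable ?_ hA_meas
      have h : ContinuousOn ((fun x : ℝ × (Fin d → ℝ) => Qr x.1 x.2) ∘ (fun a => (θ₀, a))) A :=
        hQr_cont.comp (Continuous.continuousOn (by fun_prop)) (fun a ha => ⟨hθ₀, ha⟩)
      exact h
    | succ n ih =>
      have h : AEStronglyMeasurable
          (fun z : (Fin d → ℝ) × (Fin d → ℝ) => p θ₀ z.1 z.2 * Q n z.2) (((volume.restrict A).prod (volume.restrict A))) :=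
        (hp_prod θ₀ hθ₀).mul ih.comp_snd
      exact h.integral_prod_right'
  have hQb : ∀ n, ∀ a ∈ A, |Q n a| ≤ CQ := by
    intro n; induction n with
    | zero => exact fun a ha => (hQr_bdd θ₀ hθ₀ a ha).1
    | succ n ih =>
      intro a ha
      rw [hQsucc]
      have h1 : |∫ a' in A, p θ₀ a a' * Q n a'| ≤ ∫ a' in A, |p θ₀ a a' * Q n a'| := by
        simpa only [Real.norm_eq_abs] using norm_integral_le_integral_norm (μ := volume.restrict A)
          (fun a' => p θ₀ a a' * Q n a')
      have h2 : ∫ a' in A, |p θ₀ a a' * Q n a'| ≤ ∫ a' in A, p θ₀ a a' * CQ := by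
        refine integral_mono_of_nonneg (Eventually.of_forall fun a' => abs_nonneg _)
          (hpf_int θ₀ hθ₀ a ha _ CQ aestronglyMeasurable_const (fun a' _ => by
            rw [abs_of_nonneg hCQ0])) ?_
        filter_upwards [ae_restrict_mem hA_meas] with a' ha'
        rw [abs_mul]
        refine mul_le_mul ?_ (ih a' ha') (abs_nonneg _) ?_
        · rw [abs_of_nonneg (le_trans hδ.le (hδ_inf θ₀ hθ₀ a ha a' ha'))]
        · exact le_trans hδ.le (hδ_inf θ₀ hθ₀ a ha a' ha')
      have h3 : ∫ a' in A, p θ₀ a a' * CQ = CQ := by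
        rw [integral_mul_const, hp_dens θ₀ hθ₀ a ha, one_mul]
      linarith
  have hQint : ∀ n, Integrable (Q n) (volume.restrict A) := fun n => hbdd_int _ CQ (hQmeas n) (hQb n)
  -- δ * m ≤ 1 and the contraction rate κ
  have hδint : ∫ _ in A, δ = m * δ := by
    rw [setIntegral_const, smul_eq_mul, measureReal_def, ← hmdef]
  have hδm1 : δ * m ≤ 1 := by
    have h := setIntegral_mono_on (integrableOn_const hfin.ne)
      (ContinuousOn.integrableOn_compact hA_compact (hp_sl θ₀ hθ₀ a₀ ha₀))
      hA_meas (fun a' ha' => hδ_inf θ₀ hθ₀ a₀ ha₀ a' ha')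
    rw [hp_dens θ₀ hθ₀ a₀ ha₀] at h
    calc δ * m = ∫ _ in A, δ := by rw [hδint]; ring
      _ ≤ 1 := h
  set κ : ℝ := 1 - δ * m with hκdef
  have hκ0 : 0 ≤ κ := by simp [hκdef]; linarith
  have hκ1 : κ < 1 := by
    have : 0 < δ * m := mul_pos hδ hm_pos
    simp only [hκdef]; linarith
  -- total variation bound
  have hTV : ∀ a ∈ A, ∀ b ∈ A, ∫ a' in A, |p θ₀ a a' - p θ₀ b a'| ≤ 2 * κ := by
    intro a ha b hb
    have hint1 : IntegrableOn (fun a' => p θ₀ a a') A :=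
      ContinuousOn.integrableOn_compact hA_compact (hp_sl θ₀ hθ₀ a ha)
    have hint2 : IntegrableOn (fun a' => p θ₀ b a') A :=
      ContinuousOn.integrableOn_compact hA_compact (hp_sl θ₀ hθ₀ b hb)
    have hintc : IntegrableOn (fun _ : Fin d → ℝ => δ) A := integrableOn_const hfin.ne
    have h2 : ∫ a' in A, |p θ₀ a a' - p θ₀ b a'| ≤
        ∫ a' in A, ((p θ₀ a a' - δ) + (p θ₀ b a' - δ)) := by
      refine integral_mono_of_nonneg (Eventually.of_forall fun a' => abs_nonneg _)
        (((hint1.sub hintc)).add (hint2.sub hintc)) ?_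
      filter_upwards [ae_restrict_mem hA_meas] with a' ha'
      have h1 := hδ_inf θ₀ hθ₀ a ha a' ha'
      have h2 := hδ_inf θ₀ hθ₀ b hb a' ha'
      rw [abs_le]; constructor <;> linarith
    have hiA : Integrable (fun a' => p θ₀ a a' - δ) (volume.restrict A) := hint1.sub hintc
    have hiB : Integrable (fun a' => p θ₀ b a' - δ) (volume.restrict A) := hint2.sub hintc
    have h3 : ∫ a' in A, ((p θ₀ a a' - δ) + (p θ₀ b a' - δ)) = 2 * κ := by
      rw [integral_add hiA hiB, integral_sub hint1 hintc,
        integral_sub hint2 hintc, hp_dens θ₀ hθ₀ a ha, hp_dens θ₀ hθ₀ b hb, hδint]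
      simp only [hκdef]; ring
    linarith
  -- midpoint trick
  have hmid : ∀ (f : (Fin d → ℝ) → ℝ) (r : ℝ), (∀ a ∈ A, ∀ b ∈ A, |f a - f b| ≤ r) →
      ∀ a ∈ A, |f a - (sSup (f '' A) + sInf (f '' A)) / 2| ≤ r / 2 := by
    intro f r hf a ha
    have hne : (f '' A).Nonempty := ⟨f a₀, a₀, ha₀, rfl⟩
    have hbdd : BddAbove (f '' A) := by
      refine ⟨f a + r, ?_⟩
      rintro _ ⟨b, hb, rfl⟩
      have := (abs_le.mp (hf b hb a ha)).2; linarith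
    have hbdd' : BddBelow (f '' A) := by
      refine ⟨f a - r, ?_⟩
      rintro _ ⟨b, hb, rfl⟩
      have := (abs_le.mp (hf a ha b hb)).2; linarith
    have h1 : f a ≤ sSup (f '' A) := le_csSup hbdd ⟨a, ha, rfl⟩
    have h2 : sInf (f '' A) ≤ f a := csInf_le hbdd' ⟨a, ha, rfl⟩
    have h3 : sSup (f '' A) ≤ sInf (f '' A) + r := by
      refine csSup_le hne ?_
      rintro _ ⟨b, hb, rfl⟩
      have h4 : f b - r ≤ sInf (f '' A) := by
        refine le_csInf hne ?_
        rintro _ ⟨e, he, rfl⟩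
        have := (abs_le.mp (hf b hb e he)).2; linarith
      linarith
    rw [abs_le]; constructor <;> linarith
  -- oscillation decay
  set c : ℕ → ℝ := fun n => (sSup (Q n '' A) + sInf (Q n '' A)) / 2 with hcdef
  have hpair : ∀ n, ∀ a ∈ A, ∀ b ∈ A, |Q n a - Q n b| ≤ 2 * CQ * κ ^ n := by
    intro n; induction n with
    | zero =>
      intro a ha b hb
      have h1 := hQb 0 a ha; have h2 := hQb 0 b hb
      have := abs_sub (Q 0 a) (Q 0 b)
      simpa using by linarith [abs_sub_abs_le_abs_sub (Q 0 a) (Q 0 b), abs_sub (Q 0 a) (Q 0 b)]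
    | succ n ih =>
      intro a ha b hb
      have hoscn : ∀ a' ∈ A, |Q n a' - c n| ≤ CQ * κ ^ n := by
        intro a' ha'
        have := hmid (Q n) (2 * CQ * κ ^ n) ih a' ha'
        calc |Q n a' - c n| ≤ 2 * CQ * κ ^ n / 2 := this
          _ = CQ * κ ^ n := by ring
      -- rewrite difference as integral against centered Q n
      have i1 : Integrable (fun a' => p θ₀ a a' * Q n a') (volume.restrict A) :=
        hpf_int θ₀ hθ₀ a ha _ CQ (hQmeas n) (hQb n)
      have i2 : Integrable (fun a' => p θ₀ b a' * Q n a') (volume.restrict A) :=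
        hpf_int θ₀ hθ₀ b hb _ CQ (hQmeas n) (hQb n)
      have i3 : Integrable (fun a' => p θ₀ a a' * c n) (volume.restrict A) :=
        hpf_int θ₀ hθ₀ a ha _ |c n| aestronglyMeasurable_const (fun _ _ => le_refl _)
      have i4 : Integrable (fun a' => p θ₀ b a' * c n) (volume.restrict A) :=
        hpf_int θ₀ hθ₀ b hb _ |c n| aestronglyMeasurable_const (fun _ _ => le_refl _)
      have e1 : ∫ a' in A, (p θ₀ a a' - p θ₀ b a') * (Q n a' - c n) =
          Q (n + 1) a - Q (n + 1) b := by
        have hfe : (fun a' => (p θ₀ a a' - p θ₀ b a') * (Q n a' - c n)) =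
            (fun a' => (p θ₀ a a' * Q n a' - p θ₀ b a' * Q n a') -
              (p θ₀ a a' * c n - p θ₀ b a' * c n)) := by
          funext a'; ring
        have i12 : Integrable (fun a' => p θ₀ a a' * Q n a' - p θ₀ b a' * Q n a')
          (volume.restrict A) := i1.sub i2
        have i34 : Integrable (fun a' => p θ₀ a a' * c n - p θ₀ b a' * c n)
          (volume.restrict A) := i3.sub i4
        rw [hfe, integral_sub i12 i34, integral_sub i1 i2, integral_sub i3 i4,
          integral_mul_const, integral_mul_const, hp_dens θ₀ hθ₀ a ha, hp_dens θ₀ hθ₀ b hb,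
          hQsucc, hQsucc]
        ring
      rw [← e1]
      have h1 : |∫ a' in A, (p θ₀ a a' - p θ₀ b a') * (Q n a' - c n)| ≤
          ∫ a' in A, |p θ₀ a a' - p θ₀ b a'| * (CQ * κ ^ n) := by
        have hn := norm_integral_le_integral_norm (μ := volume.restrict A)
          (fun a' => (p θ₀ a a' - p θ₀ b a') * (Q n a' - c n))
        simp only [Real.norm_eq_abs] at hn
        refine le_trans hn ?_
        refine integral_mono_of_nonneg (Eventually.of_forall fun a' => abs_nonneg _) ?_ ?_
        · exact (((ContinuousOn.integrableOn_compact hA_compact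
            ((hp_sl θ₀ hθ₀ a ha).sub (hp_sl θ₀ hθ₀ b hb))).abs)).mul_const _
        · filter_upwards [ae_restrict_mem hA_meas] with a' ha'
          rw [abs_mul]
          exact mul_le_mul_of_nonneg_left (hoscn a' ha') (abs_nonneg _)
      have h2 : ∫ a' in A, |p θ₀ a a' - p θ₀ b a'| * (CQ * κ ^ n) ≤ 2 * κ * (CQ * κ ^ n) := by
        rw [integral_mul_const]
        exact mul_le_mul_of_nonneg_right (hTV a ha b hb)
          (mul_nonneg hCQ0 (pow_nonneg hκ0 n))
      calc |∫ a' in A, (p θ₀ a a' - p θ₀ b a') * (Q n a' - c n)| ≤ 2 * κ * (CQ * κ ^ n) :=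
            le_trans h1 h2
        _ = 2 * CQ * κ ^ (n + 1) := by ring
  have hosc : ∀ n, ∀ a ∈ A, |Q n a - c n| ≤ CQ * κ ^ n := by
    intro n a ha
    have := hmid (Q n) (2 * CQ * κ ^ n) (hpair n) a ha
    calc |Q n a - c n| ≤ 2 * CQ * κ ^ n / 2 := this
      _ = CQ * κ ^ n := by ring
  
  -- parametric differentiation under the integral sign (frozen integrand)
  have hparam : ∀ (f : (Fin d → ℝ) → ℝ) (C : ℝ), AEStronglyMeasurable f (volume.restrict A) →
      (∀ a' ∈ A, |f a'| ≤ C) → ∀ a ∈ A, ∀ θ₁ ∈ I,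
      HasDerivAt (fun θ => ∫ a' in A, p θ a a' * f a')
        (∫ a' in A, dp θ₁ a a' * f a') θ₁ := by
    intro f C hfm hfb a ha θ₁ hθ₁
    obtain ⟨ε, hε, hball⟩ := Metric.isOpen_iff.mp hI_open θ₁ hθ₁
    have h := hasDerivAt_integral_of_dominated_loc_of_deriv_le (μ := volume.restrict A)
      (F := fun θ a' => p θ a a' * f a') (F' := fun θ a' => dp θ a a' * f a')
      (bound := fun _ => Cp * C) (x₀ := θ₁) (Metric.ball_mem_nhds _ hε) ?_ ?_ ?_ ?_ ?_ ?_
    · exact h.2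
    · filter_upwards [hI_open.eventually_mem hθ₁] with θ hθ
      exact (hp_slm θ hθ a ha).mul hfm
    · exact hpf_int θ₁ hθ₁ a ha f C hfm hfb
    · exact (hdp_slm θ₁ hθ₁ a ha).mul hfm
    · filter_upwards [ae_restrict_mem hA_meas] with a' ha'
      intro θ hθb
      rw [Real.norm_eq_abs, abs_mul]
      exact mul_le_mul (hp_bdd θ (hball hθb) a ha a' ha').2 (hfb a' ha') (abs_nonneg _) hCp0
    · exact integrable_const _
    · filter_upwards [ae_restrict_mem hA_meas] with a' ha'
      intro θ hθb
      exact (hp_deriv θ (hball hθb) a ha a' ha').mul_const (f a')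
  -- ∫ dp = 0
  have hdp0 : ∀ a ∈ A, (∫ a' in A, dp θ₀ a a') = 0 := by
    intro a ha
    have h1 : HasDerivAt (fun θ => ∫ a' in A, p θ a a' * 1) (∫ a' in A, dp θ₀ a a' * 1) θ₀ :=
      hparam (fun _ => 1) 1 aestronglyMeasurable_const (by norm_num) a ha θ₀ hθ₀
    simp only [mul_one] at h1
    have h3 : (fun θ => ∫ a' in A, p θ a a') =ᶠ[nhds θ₀] fun _ => (1:ℝ) := by
      filter_upwards [hI_open.eventually_mem hθ₀] with θ hθ using hp_dens θ hθ a ha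
    have h4 : HasDerivAt (fun θ => ∫ a' in A, p θ a a') 0 θ₀ :=
      (hasDerivAt_const θ₀ (1:ℝ)).congr_of_eventuallyEq h3
    exact h1.unique h4
  -- identification of the gradient terms
  have hgderiv : ∀ n, ∀ a ∈ A, ∀ θ₁ ∈ I, HasDerivAt (fun θ => ∫ a' in A, p θ a a' * Q n a')
      (∫ a' in A, dp θ₁ a a' * Q n a') θ₁ := fun n a ha θ₁ hθ₁ =>
    hparam (Q n) CQ (hQmeas n) (hQb n) a ha θ₁ hθ₁
  have hgterm_eq : ∀ n, ∀ a ∈ A, gterm A p (Qr θ₀) θ₀ n a =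
      ∫ a' in A, dp θ₀ a a' * Q n a' := by
    intro n a ha
    have h : gterm A p (Qr θ₀) θ₀ n a =
        deriv (fun θ => ∫ a' in A, p θ a a' * Q n a') θ₀ := by
      rw [hQdef]; rfl
    rw [h]
    exact (hgderiv n a ha θ₀ hθ₀).deriv
  -- geometric bound on the gradient terms
  have hgI_bdd : ∀ n, ∀ a ∈ A, |∫ a' in A, dp θ₀ a a' * Q n a'| ≤ Cp * m * CQ * κ ^ n := by
    intro n a ha
    have i1 : Integrable (fun a' => dp θ₀ a a' * (Q n a' - c n)) (volume.restrict A) :=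
      hdpf_int θ₀ hθ₀ a ha _ (CQ * κ ^ n) ((hQmeas n).sub aestronglyMeasurable_const) (hosc n)
    have i2 : Integrable (fun a' => dp θ₀ a a' * c n) (volume.restrict A) :=
      hdpf_int θ₀ hθ₀ a ha _ |c n| aestronglyMeasurable_const (fun _ _ => le_refl _)
    have e1 : ∫ a' in A, dp θ₀ a a' * Q n a' =
        ∫ a' in A, dp θ₀ a a' * (Q n a' - c n) := by
      have hfe : (fun a' => dp θ₀ a a' * Q n a') =
          fun a' => dp θ₀ a a' * (Q n a' - c n) + dp θ₀ a a' * c n := by funext a'; ring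
      rw [hfe, integral_add i1 i2, integral_mul_const, hdp0 a ha, zero_mul, add_zero]
    rw [e1]
    have h1 : |∫ a' in A, dp θ₀ a a' * (Q n a' - c n)| ≤
        ∫ a' in A, |dp θ₀ a a' * (Q n a' - c n)| := by
      simpa only [Real.norm_eq_abs] using norm_integral_le_integral_norm
        (μ := volume.restrict A) (fun a' => dp θ₀ a a' * (Q n a' - c n))
    have h2 : ∫ a' in A, |dp θ₀ a a' * (Q n a' - c n)| ≤
        ∫ _ in A, Cp * (CQ * κ ^ n) := by
      refine integral_mono_of_nonneg (Eventually.of_forall fun a' => abs_nonneg _)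
        (integrable_const _) ?_
      filter_upwards [ae_restrict_mem hA_meas] with a' ha'
      rw [abs_mul]
      exact mul_le_mul (hp_bdd θ₀ hθ₀ a ha a' ha').2 (hosc n a' ha') (abs_nonneg _) hCp0
    have h3 : ∫ _ in A, Cp * (CQ * κ ^ n) = Cp * m * CQ * κ ^ n := by
      rw [setIntegral_const, smul_eq_mul, measureReal_def, ← hmdef]; ring
    linarith
  have hgterm_bdd : ∀ n, ∀ a ∈ A, |gterm A p (Qr θ₀) θ₀ n a| ≤ Cp * m * CQ * κ ^ n := by
    intro n a ha
    rw [hgterm_eq n a ha]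
    exact hgI_bdd n a ha
  -- geometric series
  have hsum_geom : Summable (fun n : ℕ => Cp * m * CQ * κ ^ (n + 1)) := by
    have h := (summable_geometric_of_lt_one hκ0 hκ1).mul_left (Cp * m * CQ * κ)
    refine h.congr fun n => ?_
    ring
  -- Part 1
  have part1 : ∀ a ∈ A, Summable (fun n : ℕ => |gterm A p (Qr θ₀) θ₀ (n + 1) a|) := by
    intro a ha
    exact Summable.of_nonneg_of_le (fun n => abs_nonneg _)
      (fun n => hgterm_bdd (n + 1) a ha) hsum_geom
  -- Part 2
  have part2 : TendstoUniformlyOn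
      (fun N a => ∑ n ∈ Finset.range N, gterm A p (Qr θ₀) θ₀ (n + 1) a)
      (fun a => ∑' n : ℕ, gterm A p (Qr θ₀) θ₀ (n + 1) a) atTop A := by
    refine tendstoUniformlyOn_tsum_nat hsum_geom ?_
    intro n x hx
    rw [Real.norm_eq_abs]
    exact hgterm_bdd (n + 1) x hx
  
  -- second-variable slices
  have hp_sl2 : ∀ θ ∈ I, ∀ a' ∈ A, ContinuousOn (fun a => p θ a a') A := by
    intro θ hθ a' ha'
    have h : ContinuousOn ((fun x : ℝ × ((Fin d → ℝ) × (Fin d → ℝ)) => p x.1 x.2.1 x.2.2) ∘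
        (fun a => (θ, a, a'))) A := by
      refine hp_cont.comp (Continuous.continuousOn (by fun_prop)) ?_
      intro a ha; exact ⟨hθ, ha, ha'⟩
    exact h
  -- stationary density is integrable and bounded
  have hπs_int : ∀ θ ∈ I, Integrable (πs θ) (volume.restrict A) := by
    intro θ hθ
    by_contra h
    have h1 := hπs_dens θ hθ
    rw [integral_undef h] at h1
    norm_num at h1
  have hπs_bdd : ∀ θ ∈ I, ∀ a ∈ A, |πs θ a| ≤ Cp := by
    intro θ hθ a ha
    rw [abs_of_nonneg (hπs_nonneg θ hθ a ha), hπs_stat θ hθ a ha]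
    have h1 : Integrable (fun x => πs θ x * p θ x a) (volume.restrict A) := by
      refine Integrable.mono' ((hπs_int θ hθ).const_mul Cp)
        (((hπs_meas θ hθ).aestronglyMeasurable).mul
          ((hp_sl2 θ hθ a ha).aestronglyMeasurable hA_meas)) ?_
      filter_upwards [ae_restrict_mem hA_meas] with x hx
      rw [Real.norm_eq_abs, abs_mul, abs_of_nonneg (hπs_nonneg θ hθ x hx)]
      calc πs θ x * |p θ x a| ≤ πs θ x * Cp :=
            mul_le_mul_of_nonneg_left (hp_bdd θ hθ x hx a ha).1 (hπs_nonneg θ hθ x hx)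
        _ = Cp * πs θ x := by ring
    have h2 : ∫ x in A, πs θ x * p θ x a ≤ ∫ x in A, πs θ x * Cp := by
      refine setIntegral_mono_on h1 ((hπs_int θ hθ).mul_const Cp) hA_meas ?_
      intro x hx
      exact mul_le_mul_of_nonneg_left
        (le_trans (le_abs_self _) (hp_bdd θ hθ x hx a ha).1) (hπs_nonneg θ hθ x hx)
    have h3 : ∫ x in A, πs θ x * Cp = Cp := by
      rw [integral_mul_const, hπs_dens θ hθ, one_mul]
    linarith
  -- measurability of dπs θ₀ as a limit of difference quotients
  have hdπs_meas : AEStronglyMeasurable (dπs θ₀) (volume.restrict A) := by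
    obtain ⟨ε, hε, hball⟩ := Metric.isOpen_iff.mp hI_open θ₀ hθ₀
    have hpos : ∀ k : ℕ, 0 < ε / (2 * ((k : ℝ) + 1)) := by
      intro k; positivity
    have hseq : ∀ k : ℕ, θ₀ + ε / (2 * ((k : ℝ) + 1)) ∈ I := by
      intro k
      apply hball
      rw [Metric.mem_ball, Real.dist_eq]
      have h1 : ε / (2 * ((k : ℝ) + 1)) ≤ ε / 2 := by
        apply div_le_div_of_nonneg_left hε.le (by norm_num)
        have : (0:ℝ) ≤ (k : ℝ) := Nat.cast_nonneg k
        linarith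
      rw [add_sub_cancel_left, abs_of_pos (hpos k)]
      linarith
    refine aestronglyMeasurable_of_tendsto_ae atTop
      (f := fun (k : ℕ) a => slope (fun t => πs t a) θ₀ (θ₀ + ε / (2 * ((k : ℝ) + 1)))) ?_ ?_
    · intro k
      show AEStronglyMeasurable
        (fun a => slope (fun t => πs t a) θ₀ (θ₀ + ε / (2 * ((k : ℝ) + 1)))) (volume.restrict A)
      have hmeas : Measurable (fun a =>
          (πs (θ₀ + ε / (2 * ((k : ℝ) + 1))) a - πs θ₀ a) / (θ₀ + ε / (2 * ((k : ℝ) + 1)) - θ₀)) :=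
        ((hπs_meas _ (hseq k)).sub (hπs_meas θ₀ hθ₀)).div_const _
      have he : (fun a => slope (fun t => πs t a) θ₀ (θ₀ + ε / (2 * ((k : ℝ) + 1)))) =
          fun a => (πs (θ₀ + ε / (2 * ((k : ℝ) + 1))) a - πs θ₀ a) /
            (θ₀ + ε / (2 * ((k : ℝ) + 1)) - θ₀) := by
        funext a; rw [slope_def_field]
      rw [he]
      exact hmeas.aestronglyMeasurable
    · filter_upwards [ae_restrict_mem hA_meas] with a ha
      have hd := hπs_deriv θ₀ hθ₀ a ha
      have h0 : Tendsto (fun k : ℕ => θ₀ + ε / (2 * ((k : ℝ) + 1))) atTop (𝓝[≠] θ₀) := by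
        refine tendsto_nhdsWithin_of_tendsto_nhds_of_eventually_within _ ?_ ?_
        · have h1 : Tendsto (fun k : ℕ => ε / (2 * ((k : ℝ) + 1))) atTop (𝓝 0) := by
            have hb : Tendsto (fun k : ℕ => (ε / 2) * (1 / ((k : ℝ) + 1))) atTop
                (𝓝 ((ε / 2) * 0)) :=
              tendsto_one_div_add_atTop_nhds_zero_nat.const_mul (ε / 2)
            rw [mul_zero] at hb
            exact hb.congr (fun k => by rw [div_mul_div_comm, mul_one])
          simpa using h1.const_add θ₀
        · filter_upwards with k
          simp only [Set.mem_compl_iff, Set.mem_singleton_iff]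
          intro h
          have h2 := hpos k
          have h3 : ε / (2 * ((k : ℝ) + 1)) = 0 := by linarith [congrArg (· - θ₀) h]
          linarith
      exact (hasDerivAt_iff_tendsto_slope.mp hd).comp h0
  -- dominated differentiation of θ ↦ ∫ πs θ · X θ
  have houter : ∀ (X dX : ℝ → (Fin d → ℝ) → ℝ) (C : ℝ),
      (∀ θ ∈ I, AEStronglyMeasurable (X θ) (volume.restrict A)) →
      AEStronglyMeasurable (dX θ₀) (volume.restrict A) →
      (∀ θ ∈ I, ∀ a ∈ A, |X θ a| ≤ C) →
      (∀ θ ∈ I, ∀ a ∈ A, |dX θ a| ≤ C) →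
      (∀ θ ∈ I, ∀ a ∈ A, HasDerivAt (fun t => X t a) (dX θ a) θ) →
      HasDerivAt (fun θ => ∫ a in A, πs θ a * X θ a)
        (∫ a in A, (dπs θ₀ a * X θ₀ a + πs θ₀ a * dX θ₀ a)) θ₀ := by
    intro X dX C hXm hdXm hXb hdXb hXd
    obtain ⟨ε, hε, hball⟩ := Metric.isOpen_iff.mp hI_open θ₀ hθ₀
    have h := hasDerivAt_integral_of_dominated_loc_of_deriv_le (μ := volume.restrict A)
      (F := fun θ a => πs θ a * X θ a)
      (F' := fun θ a => dπs θ a * X θ a + πs θ a * dX θ a)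
      (bound := fun _ => Cπ * C + Cp * C) (x₀ := θ₀) (Metric.ball_mem_nhds _ hε) ?_ ?_ ?_ ?_ ?_ ?_
    · exact h.2
    · filter_upwards [hI_open.eventually_mem hθ₀] with θ hθ
      exact ((hπs_meas θ hθ).aestronglyMeasurable).mul (hXm θ hθ)
    · refine hbdd_int _ (Cp * C) (((hπs_meas θ₀ hθ₀).aestronglyMeasurable).mul (hXm θ₀ hθ₀)) ?_
      intro a ha
      rw [abs_mul]
      exact mul_le_mul (hπs_bdd θ₀ hθ₀ a ha) (hXb θ₀ hθ₀ a ha) (abs_nonneg _) hCp0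
    · exact (hdπs_meas.mul (hXm θ₀ hθ₀)).add
        (((hπs_meas θ₀ hθ₀).aestronglyMeasurable).mul hdXm)
    · filter_upwards [ae_restrict_mem hA_meas] with a ha
      intro θ hθb
      have hθI := hball hθb
      rw [Real.norm_eq_abs]
      calc |dπs θ a * X θ a + πs θ a * dX θ a| ≤ |dπs θ a * X θ a| + |πs θ a * dX θ a| :=
            abs_add_le _ _
        _ ≤ Cπ * C + Cp * C := by
            rw [abs_mul, abs_mul]
            exact add_le_add
              (mul_le_mul (hdπs_bdd θ hθI a ha) (hXb θ hθI a ha) (abs_nonneg _) hCπ0)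
              (mul_le_mul (hπs_bdd θ hθI a ha) (hdXb θ hθI a ha) (abs_nonneg _) hCp0)
    · exact integrable_const _
    · filter_upwards [ae_restrict_mem hA_meas] with a ha
      intro θ hθb
      exact (hπs_deriv θ (hball hθb) a ha).mul (hXd θ (hball hθb) a ha)
  -- Fubini + stationarity
  have hFub : ∀ θ ∈ I, ∀ (f : (Fin d → ℝ) → ℝ) (C : ℝ),
      AEStronglyMeasurable f (volume.restrict A) → (∀ a' ∈ A, |f a'| ≤ C) →
      (∫ a in A, πs θ a * ∫ a' in A, p θ a a' * f a') = ∫ a' in A, πs θ a' * f a' := by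
    intro θ hθ f C hfm hfb
    have hC0 : 0 ≤ C := le_trans (abs_nonneg _) (hfb a₀ ha₀)
    have hGm : AEStronglyMeasurable
        (fun z : (Fin d → ℝ) × (Fin d → ℝ) => πs θ z.1 * (p θ z.1 z.2 * f z.2))
        ((volume.restrict A).prod (volume.restrict A)) :=
      (((hπs_meas θ hθ).aestronglyMeasurable).comp_fst).mul ((hp_prod θ hθ).mul hfm.comp_snd)
    have hGi : Integrable (Function.uncurry fun a a' => πs θ a * (p θ a a' * f a'))
        ((volume.restrict A).prod (volume.restrict A)) := by
      refine Integrable.mono' (integrable_const (Cp * (Cp * C))) hGm ?_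
      rw [hprod_eq]
      filter_upwards [ae_restrict_mem (hA_meas.prod hA_meas)] with z hz
      obtain ⟨hz1, hz2⟩ := hz
      show ‖πs θ z.1 * (p θ z.1 z.2 * f z.2)‖ ≤ Cp * (Cp * C)
      rw [Real.norm_eq_abs, abs_mul, abs_mul]
      exact mul_le_mul (hπs_bdd θ hθ _ hz1)
        (mul_le_mul (hp_bdd θ hθ _ hz1 _ hz2).1 (hfb _ hz2) (abs_nonneg _) hCp0)
        (mul_nonneg (abs_nonneg _) (abs_nonneg _)) hCp0
    have step1 : (∫ a in A, πs θ a * ∫ a' in A, p θ a a' * f a')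
        = ∫ a in A, ∫ a' in A, πs θ a * (p θ a a' * f a') := by
      refine integral_congr_ae (Eventually.of_forall fun a => ?_)
      show πs θ a * (∫ a' in A, p θ a a' * f a') = ∫ a' in A, πs θ a * (p θ a a' * f a')
      rw [integral_const_mul]
    have step2 : (∫ a in A, ∫ a' in A, πs θ a * (p θ a a' * f a'))
        = ∫ a' in A, ∫ a in A, πs θ a * (p θ a a' * f a') :=
      integral_integral_swap hGi
    have step3 : (∫ a' in A, ∫ a in A, πs θ a * (p θ a a' * f a'))
        = ∫ a' in A, πs θ a' * f a' := by
      refine setIntegral_congr_fun hA_meas ?_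
      intro a' ha'
      show (∫ a in A, πs θ a * (p θ a a' * f a')) = πs θ a' * f a'
      have e : (fun a => πs θ a * (p θ a a' * f a')) = fun a => (πs θ a * p θ a a') * f a' := by
        funext x; ring
      rw [e, integral_mul_const, ← hπs_stat θ hθ a' ha']
    rw [step1, step2, step3]
  -- ∫ dπs θ₀ = 0
  have hdπs0 : (∫ a in A, dπs θ₀ a) = 0 := by
    have h1 := houter (fun _ _ => 1) (fun _ _ => 0) 1
      (fun θ _ => aestronglyMeasurable_const) aestronglyMeasurable_const
      (fun θ _ a _ => by norm_num) (fun θ _ a _ => by norm_num)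
      (fun θ _ a _ => hasDerivAt_const θ 1)
    simp only [mul_one, mul_zero, add_zero] at h1
    have h3 : (fun θ => ∫ a in A, πs θ a) =ᶠ[nhds θ₀] fun _ => (1:ℝ) := by
      filter_upwards [hI_open.eventually_mem hθ₀] with θ hθ using hπs_dens θ hθ
    have h4 : HasDerivAt (fun θ => ∫ a in A, πs θ a) 0 θ₀ :=
      (hasDerivAt_const θ₀ (1:ℝ)).congr_of_eventuallyEq h3
    exact h1.unique h4
  
  -- Q 0 is Qr θ₀
  have hQ0 : ∀ a, Q 0 a = Qr θ₀ a := fun a => rfl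
  -- generic bounds for kernel averages
  have hPfb : ∀ θ ∈ I, ∀ a ∈ A, ∀ (f : (Fin d → ℝ) → ℝ) (C : ℝ),
      AEStronglyMeasurable f (volume.restrict A) → (∀ a' ∈ A, |f a'| ≤ C) →
      |∫ a' in A, p θ a a' * f a'| ≤ C := by
    intro θ hθ a ha f C hfm hfb
    have hC0 : 0 ≤ C := le_trans (abs_nonneg _) (hfb a₀ ha₀)
    have h1 : |∫ a' in A, p θ a a' * f a'| ≤ ∫ a' in A, |p θ a a' * f a'| := by
      simpa only [Real.norm_eq_abs] using norm_integral_le_integral_norm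
        (μ := volume.restrict A) (fun a' => p θ a a' * f a')
    have h2 : ∫ a' in A, |p θ a a' * f a'| ≤ ∫ a' in A, p θ a a' * C := by
      refine integral_mono_of_nonneg (Eventually.of_forall fun a' => abs_nonneg _)
        (hpf_int θ hθ a ha _ C aestronglyMeasurable_const (fun a' _ => by
          rw [abs_of_nonneg hC0])) ?_
      filter_upwards [ae_restrict_mem hA_meas] with a' ha'
      rw [abs_mul]
      refine mul_le_mul ?_ (hfb a' ha') (abs_nonneg _) ?_
      · rw [abs_of_nonneg (le_trans hδ.le (hδ_inf θ hθ a ha a' ha'))]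
      · exact le_trans hδ.le (hδ_inf θ hθ a ha a' ha')
    have h3 : ∫ a' in A, p θ a a' * C = C := by
      rw [integral_mul_const, hp_dens θ hθ a ha, one_mul]
    linarith
  have hdPfb : ∀ θ ∈ I, ∀ a ∈ A, ∀ (f : (Fin d → ℝ) → ℝ) (C : ℝ),
      AEStronglyMeasurable f (volume.restrict A) → (∀ a' ∈ A, |f a'| ≤ C) →
      |∫ a' in A, dp θ a a' * f a'| ≤ Cp * m * C := by
    intro θ hθ a ha f C hfm hfb
    have hC0 : 0 ≤ C := le_trans (abs_nonneg _) (hfb a₀ ha₀)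
    have h1 : |∫ a' in A, dp θ a a' * f a'| ≤ ∫ a' in A, |dp θ a a' * f a'| := by
      simpa only [Real.norm_eq_abs] using norm_integral_le_integral_norm
        (μ := volume.restrict A) (fun a' => dp θ a a' * f a')
    have h2 : ∫ a' in A, |dp θ a a' * f a'| ≤ ∫ _ in A, Cp * C := by
      refine integral_mono_of_nonneg (Eventually.of_forall fun a' => abs_nonneg _)
        (integrable_const _) ?_
      filter_upwards [ae_restrict_mem hA_meas] with a' ha'
      rw [abs_mul]
      exact mul_le_mul (hp_bdd θ hθ a ha a' ha').2 (hfb a' ha') (abs_nonneg _) hCp0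
    have h3 : ∫ _ in A, Cp * C = Cp * m * C := by
      rw [setIntegral_const, smul_eq_mul, measureReal_def, ← hmdef]; ring
    linarith
  -- measurability of the kernel averages
  have hXm_n : ∀ n, ∀ θ ∈ I, AEStronglyMeasurable (fun a => ∫ a' in A, p θ a a' * Q n a')
      (volume.restrict A) := fun n θ hθ =>
    ((hp_prod θ hθ).mul (hQmeas n).comp_snd).integral_prod_right'
  have hdXm_n : ∀ n, ∀ θ ∈ I, AEStronglyMeasurable (fun a => ∫ a' in A, dp θ a a' * Q n a')
      (volume.restrict A) := fun n θ hθ =>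
    ((hdp_prod θ hθ).mul (hQmeas n).comp_snd).integral_prod_right'
  -- telescoping identity
  have htel : ∀ n, (∫ a in A, dπs θ₀ a * Q n a) =
      (∫ a in A, πs θ₀ a * ∫ a' in A, dp θ₀ a a' * Q n a')
        + ∫ a in A, dπs θ₀ a * Q (n + 1) a := by
    intro n
    have hC₁0 : (0:ℝ) ≤ CQ + Cp * m * CQ := by positivity
    have hΦ := houter (fun θ a => ∫ a' in A, p θ a a' * Q n a')
      (fun θ a => ∫ a' in A, dp θ a a' * Q n a') (CQ + Cp * m * CQ)
      (fun θ hθ => hXm_n n θ hθ) (hdXm_n n θ₀ hθ₀)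
      (fun θ hθ a ha => le_trans (hPfb θ hθ a ha _ CQ (hQmeas n) (hQb n))
        (le_add_of_nonneg_right (by positivity)))
      (fun θ hθ a ha => le_trans (hdPfb θ hθ a ha _ CQ (hQmeas n) (hQb n))
        (le_add_of_nonneg_left hCQ0))
      (fun θ hθ a ha => hgderiv n a ha θ hθ)
    have hψ := houter (fun _ a => Q n a) (fun _ _ => 0) CQ
      (fun θ hθ => hQmeas n) aestronglyMeasurable_const
      (fun θ hθ a ha => hQb n a ha) (fun θ hθ a ha => abs_zero.le.trans hCQ0)
      (fun θ hθ a ha => hasDerivAt_const θ (Q n a))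
    have heq : (fun θ => ∫ a in A, πs θ a * ∫ a' in A, p θ a a' * Q n a') =ᶠ[nhds θ₀]
        (fun θ => ∫ a in A, πs θ a * Q n a) := by
      filter_upwards [hI_open.eventually_mem hθ₀] with θ hθ
      exact hFub θ hθ (Q n) CQ (hQmeas n) (hQb n)
    have hΦ' := hΦ.congr_of_eventuallyEq heq.symm
    have huniq := hΦ'.unique hψ
    have iA : Integrable (fun a => dπs θ₀ a * Q (n + 1) a) (volume.restrict A) :=
      hbdd_int _ (Cπ * CQ) (hdπs_meas.mul (hQmeas (n + 1))) (fun a ha => by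
        rw [abs_mul]
        exact mul_le_mul (hdπs_bdd θ₀ hθ₀ a ha) (hQb (n + 1) a ha) (abs_nonneg _) hCπ0)
    have iB : Integrable (fun a => πs θ₀ a * ∫ a' in A, dp θ₀ a a' * Q n a')
        (volume.restrict A) :=
      hbdd_int _ (Cp * (Cp * m * CQ)) (((hπs_meas θ₀ hθ₀).aestronglyMeasurable).mul
        (hdXm_n n θ₀ hθ₀)) (fun a ha => by
        rw [abs_mul]
        exact mul_le_mul (hπs_bdd θ₀ hθ₀ a ha) (hdPfb θ₀ hθ₀ a ha _ CQ (hQmeas n) (hQb n))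
          (abs_nonneg _) hCp0)
    have hval : (∫ a in A, (dπs θ₀ a * (∫ a' in A, p θ₀ a a' * Q n a')
        + πs θ₀ a * ∫ a' in A, dp θ₀ a a' * Q n a'))
        = (∫ a in A, πs θ₀ a * ∫ a' in A, dp θ₀ a a' * Q n a')
          + ∫ a in A, dπs θ₀ a * Q (n + 1) a := by
      have e : (fun a => dπs θ₀ a * (∫ a' in A, p θ₀ a a' * Q n a')
          + πs θ₀ a * ∫ a' in A, dp θ₀ a a' * Q n a')
          = fun a => dπs θ₀ a * Q (n + 1) a
            + πs θ₀ a * ∫ a' in A, dp θ₀ a a' * Q n a' := by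
        funext a; rw [hQsucc]
      rw [e, integral_add iA iB]
      ring
    have hψval : (∫ a in A, (dπs θ₀ a * Q n a + πs θ₀ a * 0)) = ∫ a in A, dπs θ₀ a * Q n a := by
      simp
    rw [← hψval, ← huniq, hval]
  -- geometric decay of J n
  have hJb : ∀ n, |∫ a in A, dπs θ₀ a * Q n a| ≤ Cπ * m * CQ * κ ^ n := by
    intro n
    have i1 : Integrable (fun a => dπs θ₀ a * (Q n a - c n)) (volume.restrict A) :=
      hbdd_int _ (Cπ * (CQ * κ ^ n)) (hdπs_meas.mul ((hQmeas n).sub aestronglyMeasurable_const))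
        (fun a ha => by
          rw [abs_mul]
          exact mul_le_mul (hdπs_bdd θ₀ hθ₀ a ha) (hosc n a ha) (abs_nonneg _) hCπ0)
    have i2 : Integrable (fun a => dπs θ₀ a * c n) (volume.restrict A) :=
      hbdd_int _ (Cπ * |c n|) (hdπs_meas.mul aestronglyMeasurable_const)
        (fun a ha => by
          rw [abs_mul]
          exact mul_le_mul (hdπs_bdd θ₀ hθ₀ a ha) (le_refl _) (abs_nonneg _) hCπ0)
    have e1 : (∫ a in A, dπs θ₀ a * Q n a) = ∫ a in A, dπs θ₀ a * (Q n a - c n) := by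
      have hfe : (fun a => dπs θ₀ a * Q n a) =
          fun a => dπs θ₀ a * (Q n a - c n) + dπs θ₀ a * c n := by funext a; ring
      rw [hfe, integral_add i1 i2, integral_mul_const, hdπs0, zero_mul, add_zero]
    rw [e1]
    have h1 : |∫ a in A, dπs θ₀ a * (Q n a - c n)| ≤ ∫ a in A, |dπs θ₀ a * (Q n a - c n)| := by
      simpa only [Real.norm_eq_abs] using norm_integral_le_integral_norm
        (μ := volume.restrict A) (fun a => dπs θ₀ a * (Q n a - c n))
    have h2 : ∫ a in A, |dπs θ₀ a * (Q n a - c n)| ≤ ∫ _ in A, Cπ * (CQ * κ ^ n) := by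
      refine integral_mono_of_nonneg (Eventually.of_forall fun a => abs_nonneg _)
        (integrable_const _) ?_
      filter_upwards [ae_restrict_mem hA_meas] with a ha
      rw [abs_mul]
      exact mul_le_mul (hdπs_bdd θ₀ hθ₀ a ha) (hosc n a ha) (abs_nonneg _) hCπ0
    have h3 : ∫ _ in A, Cπ * (CQ * κ ^ n) = Cπ * m * CQ * κ ^ n := by
      rw [setIntegral_const, smul_eq_mul, measureReal_def, ← hmdef]; ring
    linarith
  -- partial sums telescope
  have hpartial : ∀ N,
      (∑ n ∈ Finset.range N, ∫ a in A, πs θ₀ a * ∫ a' in A, dp θ₀ a a' * Q n a')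
      = (∫ a in A, dπs θ₀ a * Q 0 a) - ∫ a in A, dπs θ₀ a * Q N a := by
    intro N; induction N with
    | zero => simp
    | succ N ih =>
      rw [Finset.sum_range_succ, ih]
      have h := htel N
      linarith
  have hJtend : Tendsto (fun N => ∫ a in A, dπs θ₀ a * Q N a) atTop (𝓝 0) := by
    refine squeeze_zero_norm (fun n => by
      simpa only [Real.norm_eq_abs] using hJb n) ?_
    have h := tendsto_pow_atTop_nhds_zero_of_lt_one hκ0 hκ1
    simpa using h.const_mul (Cπ * m * CQ)
  have hT_tend : Tendsto
      (fun N => ∑ n ∈ Finset.range N, ∫ a in A, πs θ₀ a * ∫ a' in A, dp θ₀ a a' * Q n a')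
      atTop (𝓝 (∫ a in A, dπs θ₀ a * Q 0 a)) := by
    have h := (tendsto_const_nhds
      (x := ∫ a in A, dπs θ₀ a * Q 0 a) (f := atTop (α := ℕ))).sub hJtend
    rw [sub_zero] at h
    exact h.congr (fun N => (hpartial N).symm)
  -- summability of T
  have hTb : ∀ n, |∫ a in A, πs θ₀ a * ∫ a' in A, dp θ₀ a a' * Q n a'|
      ≤ Cp * (Cp * m * CQ * κ ^ n) * m := by
    intro n
    have h1 : |∫ a in A, πs θ₀ a * ∫ a' in A, dp θ₀ a a' * Q n a'|
        ≤ ∫ a in A, |πs θ₀ a * ∫ a' in A, dp θ₀ a a' * Q n a'| := by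
      simpa only [Real.norm_eq_abs] using norm_integral_le_integral_norm
        (μ := volume.restrict A) (fun a => πs θ₀ a * ∫ a' in A, dp θ₀ a a' * Q n a')
    have h2 : ∫ a in A, |πs θ₀ a * ∫ a' in A, dp θ₀ a a' * Q n a'|
        ≤ ∫ _ in A, Cp * (Cp * m * CQ * κ ^ n) := by
      refine integral_mono_of_nonneg (Eventually.of_forall fun a => abs_nonneg _)
        (integrable_const _) ?_
      filter_upwards [ae_restrict_mem hA_meas] with a ha
      rw [abs_mul]
      exact mul_le_mul (hπs_bdd θ₀ hθ₀ a ha) (hgI_bdd n a ha) (abs_nonneg _) hCp0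
    have h3 : ∫ _ in A, Cp * (Cp * m * CQ * κ ^ n) = Cp * (Cp * m * CQ * κ ^ n) * m := by
      rw [setIntegral_const, smul_eq_mul, measureReal_def, ← hmdef]; ring
    linarith
  have hgeom2 : Summable (fun n : ℕ => Cp * (Cp * m * CQ * κ ^ n) * m) := by
    have h := (summable_geometric_of_lt_one hκ0 hκ1).mul_left (Cp * (Cp * m * CQ) * m)
    refine h.congr fun n => ?_
    ring
  have hTsummable : Summable
      (fun n => ∫ a in A, πs θ₀ a * ∫ a' in A, dp θ₀ a a' * Q n a') := by
    refine Summable.of_abs (Summable.of_nonneg_of_le (fun n => abs_nonneg _)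
      (fun n => hTb n) hgeom2)
  have htsum_eq : (∑' n : ℕ, ∫ a in A, πs θ₀ a * ∫ a' in A, dp θ₀ a a' * Q n a')
      = ∫ a in A, dπs θ₀ a * Q 0 a :=
    tendsto_nhds_unique hTsummable.hasSum.tendsto_sum_nat hT_tend
  
  -- measurability of Qr, dQr slices
  have hQrm : ∀ θ ∈ I, AEStronglyMeasurable (Qr θ) (volume.restrict A) := by
    intro θ hθ
    refine ContinuousOn.aestronglyMeasurable ?_ hA_meas
    have h : ContinuousOn ((fun x : ℝ × (Fin d → ℝ) => Qr x.1 x.2) ∘ (fun a => (θ, a))) A :=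
      hQr_cont.comp (Continuous.continuousOn (by fun_prop)) (fun a ha => ⟨hθ, ha⟩)
    exact h
  have hdQrm : AEStronglyMeasurable (dQr θ₀) (volume.restrict A) := by
    refine ContinuousOn.aestronglyMeasurable ?_ hA_meas
    have h : ContinuousOn ((fun x : ℝ × (Fin d → ℝ) => dQr x.1 x.2) ∘ (fun a => (θ₀, a))) A :=
      hdQr_cont.comp (Continuous.continuousOn (by fun_prop)) (fun a ha => ⟨hθ₀, ha⟩)
    exact h
  -- the main derivative
  have hmain := houter Qr dQr CQ hQrm hdQrm (fun θ hθ a ha => (hQr_bdd θ hθ a ha).1)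
    (fun θ hθ a ha => (hQr_bdd θ hθ a ha).2) (fun θ hθ a ha => hQr_deriv θ hθ a ha)
  -- joint derivative of the inner integral
  have hD : ∀ a ∈ A, HasDerivAt (fun θ => ∫ a' in A, p θ a a' * Qr θ a')
      (∫ a' in A, (dp θ₀ a a' * Qr θ₀ a' + p θ₀ a a' * dQr θ₀ a')) θ₀ := by
    intro a ha
    obtain ⟨ε, hε, hball⟩ := Metric.isOpen_iff.mp hI_open θ₀ hθ₀
    have h := hasDerivAt_integral_of_dominated_loc_of_deriv_le (μ := volume.restrict A)
      (F := fun θ a' => p θ a a' * Qr θ a')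
      (F' := fun θ a' => dp θ a a' * Qr θ a' + p θ a a' * dQr θ a')
      (bound := fun _ => Cp * CQ + Cp * CQ) (x₀ := θ₀) (Metric.ball_mem_nhds _ hε) ?_ ?_ ?_ ?_ ?_ ?_
    · exact h.2
    · filter_upwards [hI_open.eventually_mem hθ₀] with θ hθ
      exact (hp_slm θ hθ a ha).mul (hQrm θ hθ)
    · exact hpf_int θ₀ hθ₀ a ha _ CQ (hQrm θ₀ hθ₀) (fun a' ha' => (hQr_bdd θ₀ hθ₀ a' ha').1)
    · exact ((hdp_slm θ₀ hθ₀ a ha).mul (hQrm θ₀ hθ₀)).add ((hp_slm θ₀ hθ₀ a ha).mul hdQrm)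
    · filter_upwards [ae_restrict_mem hA_meas] with a' ha'
      intro θ hθb
      have hθI := hball hθb
      rw [Real.norm_eq_abs]
      calc |dp θ a a' * Qr θ a' + p θ a a' * dQr θ a'|
          ≤ |dp θ a a' * Qr θ a'| + |p θ a a' * dQr θ a'| := abs_add_le _ _
        _ ≤ Cp * CQ + Cp * CQ := by
            rw [abs_mul, abs_mul]
            exact add_le_add
              (mul_le_mul (hp_bdd θ hθI a ha a' ha').2 (hQr_bdd θ hθI a' ha').1
                (abs_nonneg _) hCp0)
              (mul_le_mul (hp_bdd θ hθI a ha a' ha').1 (hQr_bdd θ hθI a' ha').2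
                (abs_nonneg _) hCp0)
    · exact integrable_const _
    · filter_upwards [ae_restrict_mem hA_meas] with a' ha'
      intro θ hθb
      exact (hp_deriv θ (hball hθb) a ha a' ha').mul (hQr_deriv θ (hball hθb) a' ha')
  -- per-n integrability of T's integrand
  have iT : ∀ n, Integrable (fun a => πs θ₀ a * ∫ a' in A, dp θ₀ a a' * Q n a')
      (volume.restrict A) := fun n =>
    hbdd_int _ (Cp * (Cp * m * CQ)) (((hπs_meas θ₀ hθ₀).aestronglyMeasurable).mul
      (hdXm_n n θ₀ hθ₀)) (fun a ha => by
      rw [abs_mul]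
      exact mul_le_mul (hπs_bdd θ₀ hθ₀ a ha) (hdPfb θ₀ hθ₀ a ha _ CQ (hQmeas n) (hQb n))
        (abs_nonneg _) hCp0)
  -- swap integral and sum
  have hswap : (∫ a in A, πs θ₀ a * ∑' n : ℕ, ∫ a' in A, dp θ₀ a a' * Q n a')
      = ∫ a in A, dπs θ₀ a * Q 0 a := by
    have hnorm_sum : Summable (fun n : ℕ =>
        ∫ a in A, ‖πs θ₀ a * ∫ a' in A, dp θ₀ a a' * Q n a'‖) := by
      refine Summable.of_nonneg_of_le
        (fun n => integral_nonneg fun a => norm_nonneg _) (fun n => ?_) hgeom2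
      have h2 : ∫ a in A, ‖πs θ₀ a * ∫ a' in A, dp θ₀ a a' * Q n a'‖
          ≤ ∫ _ in A, Cp * (Cp * m * CQ * κ ^ n) := by
        refine integral_mono_of_nonneg (Eventually.of_forall fun a => norm_nonneg _)
          (integrable_const _) ?_
        filter_upwards [ae_restrict_mem hA_meas] with a ha
        rw [Real.norm_eq_abs, abs_mul]
        exact mul_le_mul (hπs_bdd θ₀ hθ₀ a ha) (hgI_bdd n a ha) (abs_nonneg _) hCp0
      have h3 : ∫ _ in A, Cp * (Cp * m * CQ * κ ^ n) = Cp * (Cp * m * CQ * κ ^ n) * m := by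
        rw [setIntegral_const, smul_eq_mul, measureReal_def, ← hmdef]; ring
      exact h2.trans (le_of_eq h3)
    have h := integral_tsum_of_summable_integral_norm (μ := volume.restrict A)
      (F := fun n (a : Fin d → ℝ) => πs θ₀ a * ∫ a' in A, dp θ₀ a a' * Q n a') iT hnorm_sum
    calc (∫ a in A, πs θ₀ a * ∑' n : ℕ, ∫ a' in A, dp θ₀ a a' * Q n a')
        = ∫ a in A, ∑' n : ℕ, πs θ₀ a * ∫ a' in A, dp θ₀ a a' * Q n a' := by
          refine integral_congr_ae (Eventually.of_forall fun a => ?_)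
          exact tsum_mul_left.symm
      _ = ∑' n : ℕ, ∫ a in A, πs θ₀ a * ∫ a' in A, dp θ₀ a a' * Q n a' := h.symm
      _ = ∫ a in A, dπs θ₀ a * Q 0 a := htsum_eq
  -- pointwise identity for the claimed integrand
  have hptwise : ∀ a ∈ A, πs θ₀ a * (deriv (fun θ => ∫ a' in A, p θ a a' * Qr θ a') θ₀
      + ∑' n : ℕ, gterm A p (Qr θ₀) θ₀ (n + 1) a)
      = πs θ₀ a * (∫ a' in A, p θ₀ a a' * dQr θ₀ a')
        + πs θ₀ a * ∑' n : ℕ, ∫ a' in A, dp θ₀ a a' * Q n a' := by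
    intro a ha
    have hsummable : Summable (fun n : ℕ => ∫ a' in A, dp θ₀ a a' * Q n a') := by
      refine Summable.of_abs (Summable.of_nonneg_of_le (fun n => abs_nonneg _)
        (fun n => hgI_bdd n a ha) ?_)
      exact (summable_geometric_of_lt_one hκ0 hκ1).mul_left (Cp * m * CQ)
    have hd' := (hD a ha).deriv
    have hsplit : (∫ a' in A, (dp θ₀ a a' * Qr θ₀ a' + p θ₀ a a' * dQr θ₀ a'))
        = (∫ a' in A, dp θ₀ a a' * Q 0 a') + ∫ a' in A, p θ₀ a a' * dQr θ₀ a' := by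
      have i1 : Integrable (fun a' => dp θ₀ a a' * Qr θ₀ a') (volume.restrict A) :=
        hdpf_int θ₀ hθ₀ a ha _ CQ (hQrm θ₀ hθ₀) (fun a' ha' => (hQr_bdd θ₀ hθ₀ a' ha').1)
      have i2 : Integrable (fun a' => p θ₀ a a' * dQr θ₀ a') (volume.restrict A) :=
        hpf_int θ₀ hθ₀ a ha _ CQ hdQrm (fun a' ha' => (hQr_bdd θ₀ hθ₀ a' ha').2)
      rw [integral_add i1 i2]
      congr 1
    have htshift : (∑' n : ℕ, ∫ a' in A, dp θ₀ a a' * Q n a')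
        = (∫ a' in A, dp θ₀ a a' * Q 0 a')
          + ∑' n : ℕ, ∫ a' in A, dp θ₀ a a' * Q (n + 1) a' :=
      hsummable.tsum_eq_zero_add
    have hgt : (∑' n : ℕ, gterm A p (Qr θ₀) θ₀ (n + 1) a)
        = ∑' n : ℕ, ∫ a' in A, dp θ₀ a a' * Q (n + 1) a' :=
      tsum_congr (fun n => hgterm_eq (n + 1) a ha)
    rw [hd', hsplit, hgt, htshift]
    ring
  -- bound for the tail sum
  have hSb : ∀ a ∈ A, |∑' n : ℕ, ∫ a' in A, dp θ₀ a a' * Q n a'|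
      ≤ Cp * m * CQ * (1 - κ)⁻¹ := by
    intro a ha
    have habs : Summable (fun n : ℕ => |∫ a' in A, dp θ₀ a a' * Q n a'|) :=
      Summable.of_nonneg_of_le (fun n => abs_nonneg _) (fun n => hgI_bdd n a ha)
        ((summable_geometric_of_lt_one hκ0 hκ1).mul_left (Cp * m * CQ))
    have h1 : |∑' n : ℕ, ∫ a' in A, dp θ₀ a a' * Q n a'|
        ≤ ∑' n : ℕ, |∫ a' in A, dp θ₀ a a' * Q n a'| := by
      simpa only [Real.norm_eq_abs] using
        norm_tsum_le_tsum_norm (f := fun n : ℕ => ∫ a' in A, dp θ₀ a a' * Q n a')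
          (by simpa only [Real.norm_eq_abs] using habs)
    have h2 : (∑' n : ℕ, |∫ a' in A, dp θ₀ a a' * Q n a'|)
        ≤ ∑' n : ℕ, Cp * m * CQ * κ ^ n :=
      Summable.tsum_le_tsum (fun n => hgI_bdd n a ha) habs
        ((summable_geometric_of_lt_one hκ0 hκ1).mul_left (Cp * m * CQ))
    have h3 : (∑' n : ℕ, Cp * m * CQ * κ ^ n) = Cp * m * CQ * (1 - κ)⁻¹ := by
      rw [tsum_mul_left, tsum_geometric_of_lt_one hκ0 hκ1]
    linarith
  -- measurability of the tail sum
  have hSm : AEStronglyMeasurable (fun a => ∑' n : ℕ, ∫ a' in A, dp θ₀ a a' * Q n a')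
      (volume.restrict A) := by
    refine aestronglyMeasurable_of_tendsto_ae atTop
      (f := fun N a => ∑ n ∈ Finset.range N, ∫ a' in A, dp θ₀ a a' * Q n a') ?_ ?_
    · intro N
      exact Finset.aestronglyMeasurable_fun_sum _ (fun n _ => hdXm_n n θ₀ hθ₀)
    · filter_upwards [ae_restrict_mem hA_meas] with a ha
      have hsummable : Summable (fun n : ℕ => ∫ a' in A, dp θ₀ a a' * Q n a') := by
        refine Summable.of_abs (Summable.of_nonneg_of_le (fun n => abs_nonneg _)
          (fun n => hgI_bdd n a ha) ?_)
        exact (summable_geometric_of_lt_one hκ0 hκ1).mul_left (Cp * m * CQ)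
      exact hsummable.hasSum.tendsto_sum_nat
  -- final value identity
  have hfinal : (∫ a in A, πs θ₀ a * (deriv (fun θ => ∫ a' in A, p θ a a' * Qr θ a') θ₀
      + ∑' n : ℕ, gterm A p (Qr θ₀) θ₀ (n + 1) a))
      = ∫ a in A, (dπs θ₀ a * Qr θ₀ a + πs θ₀ a * dQr θ₀ a) := by
    have iE : Integrable (fun a => πs θ₀ a * ∫ a' in A, p θ₀ a a' * dQr θ₀ a')
        (volume.restrict A) :=
      hbdd_int _ (Cp * CQ) (((hπs_meas θ₀ hθ₀).aestronglyMeasurable).mul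
        (((hp_prod θ₀ hθ₀).mul hdQrm.comp_snd).integral_prod_right')) (fun a ha => by
        rw [abs_mul]
        exact mul_le_mul (hπs_bdd θ₀ hθ₀ a ha)
          (hPfb θ₀ hθ₀ a ha _ CQ hdQrm (fun a' ha' => (hQr_bdd θ₀ hθ₀ a' ha').2))
          (abs_nonneg _) hCp0)
    have iS : Integrable (fun a => πs θ₀ a * ∑' n : ℕ, ∫ a' in A, dp θ₀ a a' * Q n a')
        (volume.restrict A) :=
      hbdd_int _ (Cp * (Cp * m * CQ * (1 - κ)⁻¹))
        (((hπs_meas θ₀ hθ₀).aestronglyMeasurable).mul hSm) (fun a ha => by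
        rw [abs_mul]
        exact mul_le_mul (hπs_bdd θ₀ hθ₀ a ha) (hSb a ha) (abs_nonneg _) hCp0)
    have e1 : (∫ a in A, πs θ₀ a * (deriv (fun θ => ∫ a' in A, p θ a a' * Qr θ a') θ₀
        + ∑' n : ℕ, gterm A p (Qr θ₀) θ₀ (n + 1) a))
        = ∫ a in A, (πs θ₀ a * (∫ a' in A, p θ₀ a a' * dQr θ₀ a')
          + πs θ₀ a * ∑' n : ℕ, ∫ a' in A, dp θ₀ a a' * Q n a') :=
      setIntegral_congr_fun hA_meas (fun a ha => hptwise a ha)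
    have e2 : (∫ a in A, (πs θ₀ a * (∫ a' in A, p θ₀ a a' * dQr θ₀ a')
        + πs θ₀ a * ∑' n : ℕ, ∫ a' in A, dp θ₀ a a' * Q n a'))
        = (∫ a in A, πs θ₀ a * ∫ a' in A, p θ₀ a a' * dQr θ₀ a')
          + ∫ a in A, πs θ₀ a * ∑' n : ℕ, ∫ a' in A, dp θ₀ a a' * Q n a' :=
      integral_add iE iS
    have e3 : (∫ a in A, πs θ₀ a * ∫ a' in A, p θ₀ a a' * dQr θ₀ a')
        = ∫ a' in A, πs θ₀ a' * dQr θ₀ a' :=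
      hFub θ₀ hθ₀ (dQr θ₀) CQ hdQrm (fun a' ha' => (hQr_bdd θ₀ hθ₀ a' ha').2)
    have e4 : (∫ a in A, dπs θ₀ a * Q 0 a) = ∫ a in A, dπs θ₀ a * Qr θ₀ a := by
      refine integral_congr_ae (Eventually.of_forall fun a => ?_)
      show dπs θ₀ a * Q 0 a = dπs θ₀ a * Qr θ₀ a
      rw [hQ0]
    have iJ0 : Integrable (fun a => dπs θ₀ a * Qr θ₀ a) (volume.restrict A) :=
      hbdd_int _ (Cπ * CQ) (hdπs_meas.mul (hQrm θ₀ hθ₀)) (fun a ha => by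
        rw [abs_mul]
        exact mul_le_mul (hdπs_bdd θ₀ hθ₀ a ha) (hQr_bdd θ₀ hθ₀ a ha).1 (abs_nonneg _) hCπ0)
    have iQd : Integrable (fun a => πs θ₀ a * dQr θ₀ a) (volume.restrict A) :=
      hbdd_int _ (Cp * CQ) (((hπs_meas θ₀ hθ₀).aestronglyMeasurable).mul hdQrm)
        (fun a ha => by
        rw [abs_mul]
        exact mul_le_mul (hπs_bdd θ₀ hθ₀ a ha) (hQr_bdd θ₀ hθ₀ a ha).2 (abs_nonneg _) hCp0)
    have e5 : (∫ a in A, (dπs θ₀ a * Qr θ₀ a + πs θ₀ a * dQr θ₀ a))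
        = (∫ a in A, dπs θ₀ a * Qr θ₀ a) + ∫ a in A, πs θ₀ a * dQr θ₀ a :=
      integral_add iJ0 iQd
    rw [e1, e2, e3, hswap, e4, e5]
    ring
  refine ⟨part1, part2, ?_⟩
  rw [hfinal]
  exact hmain
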